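/- Let G be a connected graph, P a longest path in G with L edges, and let ecc_G(P) denote the eccentricity of P. Then ecc_G(P) ≤ min{n - L - 1, L/2}, where n = |V(G)|; consequently ecc_G(P) ≤ (n-1)/3. -/
import Mathlib


open SimpleGraph

variable {V : Type*} [Fintype V] [DecidableEq V]

/-- Distance from a vertex `u` to the vertex set of a walk `P`. -/
noncomputable def walkDist (G : SimpleGraph V) {a b : V} (P : G.Walk a b) (u : V) : ℕ :=
  P.support.toFinset.inf' ⟨a, List.mem_toFinset.mpr P.start_mem_support⟩ (fun x => G.dist u x)

/-- Eccentricity of a walk: max distance from any vertex of `G` to the walk. -/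
noncomputable def eccW (G : SimpleGraph V) {a b : V} (P : G.Walk a b) : ℕ :=
  Finset.univ.sup (walkDist G P)

/-- Path eccentricity of a graph. -/
noncomputable def pe (G : SimpleGraph V) : ℕ :=
  sInf {m | ∃ (a b : V) (P : G.Walk a b), P.IsPath ∧ eccW G P = m}

/-- `P` is a longest path in `G`. -/
def IsLongestPath (G : SimpleGraph V) {a b : V} (P : G.Walk a b) : Prop :=
  P.IsPath ∧ ∀ (c d : V) (Q : G.Walk c d), Q.IsPath → Q.length ≤ P.length

/-- `G` is `k`-connected. -/
def KConnected (k : ℕ) (G : SimpleGraph V) : Prop :=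
  k + 1 ≤ Fintype.card V ∧
    ∀ S : Finset V, S.card < k → (G.induce ((↑S : Set V)ᶜ)).Connected

/-- Appending paths that meet only at the common endpoint gives a path. -/
lemma isPath_append_aux {G : SimpleGraph V} {u v w : V} {p : G.Walk u v} {q : G.Walk v w}
    (hp : p.IsPath) (hq : q.IsPath) (h : ∀ y, y ∈ p.support → y ∈ q.support → y = v) :
    (p.append q).IsPath := by
  rw [Walk.isPath_def, Walk.support_append]
  refine List.Nodup.append hp.support_nodup ?_ ?_
  · exact hq.support_nodup.tail
  · intro y hy hy'
    have hyq : y ∈ q.support := List.mem_of_mem_tail hy'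
    have := h y hy hyq
    subst this
    have := hq.support_nodup
    have hq0 : q.support = y :: q.support.tail := by
      have := q.support_eq_cons
      rw [this]; rfl
    rw [hq0, List.nodup_cons] at this
    exact this.1 hy'

lemma key_lemma (G : SimpleGraph V) (hG : G.Connected)
    {a b : V} (P : G.Walk a b) (hP : IsLongestPath G P) (u : V) :
    2 * walkDist G P u ≤ P.length ∧ walkDist G P u + P.length + 1 ≤ Fintype.card V := by
  classical
  obtain ⟨x, hxmem, hxeq⟩ := Finset.exists_mem_eq_inf' (s := P.support.toFinset)
    ⟨a, List.mem_toFinset.mpr P.start_mem_support⟩ (fun x => G.dist u x)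
  have hxP : x ∈ P.support := List.mem_toFinset.mp hxmem
  set d := G.dist u x with hd
  have hwd : walkDist G P u = d := hxeq
  have hmin : ∀ y ∈ P.support, d ≤ G.dist u y := by
    intro y hy
    rw [← hwd]
    exact Finset.inf'_le _ (List.mem_toFinset.mpr hy)
  obtain ⟨W, hWp, hWl⟩ := (hG u x).exists_path_of_dist
  -- W meets P only at x
  have meet : ∀ y, y ∈ W.support → y ∈ P.support → y = x := by
    intro y hyW hyP
    have h1 : (W.takeUntil y hyW).length + (W.dropUntil y hyW).length = d := by
      have := congrArg Walk.length (W.take_spec hyW)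
      rwa [Walk.length_append, hWl] at this
    have h2 : G.dist u y ≤ (W.takeUntil y hyW).length := SimpleGraph.dist_le _
    have h3 := hmin y hyP
    have h4 : (W.dropUntil y hyW).length = 0 := by omega
    exact Walk.eq_of_length_eq_zero h4
  -- split P at x
  set P1 := P.takeUntil x hxP with hP1
  set P2 := P.dropUntil x hxP with hP2
  have hLL : P1.length + P2.length = P.length := by
    have := congrArg Walk.length (P.take_spec hxP)
    rwa [Walk.length_append] at this
  have hQ2 : d + P2.length ≤ P.length := by
    have hpath : (W.append P2).IsPath := by
      refine isPath_append_aux hWp (hP.1.dropUntil hxP) ?_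
      intro y hyW hyP2
      exact meet y hyW (P.support_dropUntil_subset hxP hyP2)
    have := hP.2 _ _ _ hpath
    rwa [Walk.length_append, hWl] at this
  have hQ1 : d + P1.length ≤ P.length := by
    have hpath : (W.append P1.reverse).IsPath := by
      refine isPath_append_aux hWp (hP.1.takeUntil hxP).reverse ?_
      intro y hyW hyP1
      rw [Walk.support_reverse, List.mem_reverse] at hyP1
      exact meet y hyW (P.support_takeUntil_subset hxP hyP1)
    have := hP.2 _ _ _ hpath
    rwa [Walk.length_append, Walk.length_reverse, hWl] at this
  constructor
  · rw [hwd]; omega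
  · -- cardinality count
    set A := P.support.toFinset with hA
    set B := W.support.toFinset with hB
    have hAcard : A.card = P.length + 1 := by
      rw [hA, List.toFinset_card_of_nodup hP.1.support_nodup, Walk.length_support]
    have hBcard : B.card = d + 1 := by
      rw [hB, List.toFinset_card_of_nodup hWp.support_nodup, Walk.length_support, hWl]
    have hinter : A ∩ B = {x} := by
      ext y
      simp only [Finset.mem_inter, Finset.mem_singleton, hA, hB, List.mem_toFinset]
      constructor
      · rintro ⟨h1, h2⟩; exact meet y h2 h1
      · rintro rfl; exact ⟨hxP, W.end_mem_support⟩
    have hcard := Finset.card_union_add_card_inter A B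
    have hle : (A ∪ B).card ≤ Fintype.card V := Finset.card_le_univ _
    rw [hinter, Finset.card_singleton] at hcard
    rw [hwd]
    omega

theorem stmt18 (G : SimpleGraph V) (hG : G.Connected)
    {a b : V} (P : G.Walk a b) (hP : IsLongestPath G P) :
    (eccW G P : ℝ) ≤ min ((Fintype.card V : ℝ) - P.length - 1) ((P.length : ℝ) / 2) ∧
    (eccW G P : ℝ) ≤ ((Fintype.card V : ℝ) - 1) / 3 := by
  have : Nonempty V := hG.nonempty
  obtain ⟨u, -, hu⟩ := Finset.exists_mem_eq_sup (Finset.univ : Finset V)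
    Finset.univ_nonempty (walkDist G P)
  have hkey := key_lemma G hG P hP u
  have h1 : 2 * eccW G P ≤ P.length := by rw [eccW, hu]; exact hkey.1
  have h2 : eccW G P + P.length + 1 ≤ Fintype.card V := by rw [eccW, hu]; exact hkey.2
  have h1' : 2 * (eccW G P : ℝ) ≤ (P.length : ℝ) := by exact_mod_cast h1
  have h2' : (eccW G P : ℝ) + (P.length : ℝ) + 1 ≤ (Fintype.card V : ℝ) := by exact_mod_cast h2
  constructor
  · rw [le_min_iff]; constructor <;> linarith
  · linarith
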